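/- Let M be a symmetric negative definite real r×r matrix with nonnegative off-diagonal entries, and let x, y ∈ ℝ^r with y_i ≥ 0 for all i. If (M(y − x))_j ≤ 0 for every j, then y_i − x_i ≥ 0 for every i. (Divisor form: if E is effective, the intersection matrix of the components is negative definite, and (E − D)·C_j ≤ 0 for all components C_j, then E − D ≥ 0.) -/

import Mathlib

/-!
Write `z = y - x = z⁺ - z⁻`. Since `M z ≤ 0` and `z⁻ ≥ 0`, we get `z⁻ ⬝ M z ≤ 0`; since `z⁺` and `z⁻`
have disjoint supports, only off-diagonal entries of `M` contribute to `z⁻ ⬝ M z⁺`, so it is `≥ 0`.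
Hence `z⁻ ⬝ M z⁻ = z⁻ ⬝ M z⁺ - z⁻ ⬝ M z ≥ 0`, and negative definiteness forces `z⁻ = 0`.
-/

open Matrix

lemma negPart_mul_posPart_eq_zero {R : Type*} [Ring R] [LinearOrder R] [IsOrderedRing R] (a : R) :
    a⁻ * a⁺ = 0 := by
  rcases le_total a 0 with ha | ha
  · rw [posPart_eq_zero.2 ha, mul_zero]
  · rw [negPart_eq_zero.2 ha, zero_mul]

lemma Matrix.dotProduct_mulVec_nonneg_of_mul_eq_zero {ι R : Type*} [Fintype ι] [CommSemiring R]
    [PartialOrder R] [IsOrderedRing R] {M : Matrix ι ι R} (hoff : ∀ i j, i ≠ j → 0 ≤ M i j)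
    {u v : ι → R} (hu : 0 ≤ u) (hv : 0 ≤ v) (huv : ∀ i, u i * v i = 0) :
    0 ≤ u ⬝ᵥ M *ᵥ v := by
  refine Finset.sum_nonneg fun i _ ↦ ?_
  rw [mulVec, dotProduct, Finset.mul_sum]
  refine Finset.sum_nonneg fun j _ ↦ ?_
  rcases eq_or_ne i j with rfl | hij
  · rw [mul_left_comm, huv, mul_zero]
  · exact mul_nonneg (hu i) (mul_nonneg (hoff i j hij) (hv j))

theorem Matrix.nonneg_of_mulVec_nonpos {ι R : Type*} [Fintype ι] [CommRing R] [LinearOrder R]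
    [IsStrictOrderedRing R] {M : Matrix ι ι R} (hneg : ∀ v : ι → R, v ≠ 0 → v ⬝ᵥ M *ᵥ v < 0)
    (hoff : ∀ i j, i ≠ j → 0 ≤ M i j) {z : ι → R} (hz : M *ᵥ z ≤ 0) : 0 ≤ z := by
  have hMz : z⁻ ⬝ᵥ M *ᵥ z ≤ 0 :=
    Finset.sum_nonpos fun j _ ↦ mul_nonpos_of_nonneg_of_nonpos (negPart_nonneg z j) (hz j)
  have hMpos : 0 ≤ z⁻ ⬝ᵥ M *ᵥ z⁺ :=
    dotProduct_mulVec_nonneg_of_mul_eq_zero hoff (negPart_nonneg z) (posPart_nonneg z)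
      fun i ↦ negPart_mul_posPart_eq_zero (z i)
  have hMneg : 0 ≤ z⁻ ⬝ᵥ M *ᵥ z⁻ := by
    have hsplit : z⁻ = z⁺ - z :=
      eq_sub_of_add_eq (sub_eq_iff_eq_add'.1 (posPart_sub_negPart z)).symm
    calc 0 ≤ z⁻ ⬝ᵥ M *ᵥ z⁺ - z⁻ ⬝ᵥ M *ᵥ z := sub_nonneg.2 (hMz.trans hMpos)
      _ = z⁻ ⬝ᵥ M *ᵥ z⁻ := by rw [← dotProduct_sub, ← mulVec_sub, ← hsplit]
  by_contra hnonneg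
  exact hMneg.not_gt (hneg _ (mt negPart_eq_zero.1 hnonneg))

theorem stmt6_general (r : ℕ) (M : Matrix (Fin r) (Fin r) ℝ)
    (hneg : ∀ v : Fin r → ℝ, v ≠ 0 → dotProduct v (M.mulVec v) < 0)
    (hoff : ∀ i j, i ≠ j → 0 ≤ M i j)
    (x y : Fin r → ℝ)
    (h : ∀ j, M.mulVec (y - x) j ≤ 0) :
    ∀ i, x i ≤ y i :=
  fun i ↦ sub_nonneg.1 (nonneg_of_mulVec_nonpos hneg hoff h i)

/-- If M is symmetric negative definite with nonnegative off-diagonal entries,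
y has nonnegative entries, and (M(y − x))_j ≤ 0 for all j, then x_i ≤ y_i for all i. -/
theorem stmt6 (r : ℕ) (M : Matrix (Fin r) (Fin r) ℝ)
    (hsym : M.IsSymm)
    (hneg : ∀ v : Fin r → ℝ, v ≠ 0 → dotProduct v (M.mulVec v) < 0)
    (hoff : ∀ i j, i ≠ j → 0 ≤ M i j)
    (x y : Fin r → ℝ) (hy : ∀ i, 0 ≤ y i)
    (h : ∀ j, M.mulVec (y - x) j ≤ 0) :
    ∀ i, x i ≤ y i :=
  stmt6_general r M hneg hoff x y h
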